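/- arXiv:1506.00508 — 7 statements merged into one kernel-verified Lean document; each statement's English description precedes it below -/
import Mathlib

section
/- There exist a multilayer network M with one aspect such that Aut_{{0}}(M) and Aut_{{1}}(M) are both trivial, but Aut_{{0,1}}(M) is nontrivial. Concretely, for the directed multilayer network on vertices {1,2} and layers {X,Y} with edges {((1,X),(2,X)), ((1,X),(1,Y)), ((2,Y),(1,Y)), ((2,Y),(2,X))}, the vertex automorphism group and the layer automorphism group are each trivial, while the vertex-layer automorphism group contains the nonidentity element ((1 2),(X Y)). -/
universe u

@[ext]
structure MLNet {d : ℕ} (L : Fin (d + 1) → Type u) where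
  Vm : Set (∀ a, L a)
  Em : Set ((∀ a, L a) × (∀ a, L a))

namespace MLNet

variable {d : ℕ} {L : Fin (d + 1) → Type u}

/-- Coordinatewise action of a tuple of permutations on a vertex-layer tuple. -/
def tupAct (ζ : ∀ a, Equiv.Perm (L a)) (v : ∀ a, L a) : ∀ a, L a :=
  fun a => ζ a (v a)

instance : SMul (∀ a, Equiv.Perm (L a)) (MLNet L) :=
  ⟨fun ζ M => ⟨tupAct ζ '' M.Vm, (fun e => (tupAct ζ e.1, tupAct ζ e.2)) '' M.Em⟩⟩

lemma smul_Vm (ζ : ∀ a, Equiv.Perm (L a)) (M : MLNet L) :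
    (ζ • M).Vm = tupAct ζ '' M.Vm := rfl

lemma smul_Em (ζ : ∀ a, Equiv.Perm (L a)) (M : MLNet L) :
    (ζ • M).Em = (fun e => (tupAct ζ e.1, tupAct ζ e.2)) '' M.Em := rfl

instance : MulAction (∀ a, Equiv.Perm (L a)) (MLNet L) where
  one_smul M := MLNet.ext (Set.image_id M.Vm) (Set.image_id M.Em)
  mul_smul ζ η M := by
    refine MLNet.ext (Set.image_comp (tupAct ζ) (tupAct η) M.Vm) ?_
    exact Set.image_comp
      (fun e : (∀ a, L a) × (∀ a, L a) => (tupAct ζ e.1, tupAct ζ e.2))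
      (fun e : (∀ a, L a) × (∀ a, L a) => (tupAct η e.1, tupAct η e.2)) M.Em

/-- The group `P_p` of tuples of permutations that are the identity outside `p`. -/
def Pp (L : Fin (d + 1) → Type u) (p : Set (Fin (d + 1))) :
    Subgroup (∀ a, Equiv.Perm (L a)) :=
  Subgroup.pi pᶜ fun _ => ⊥

/-- The automorphism group `Aut_p(M)` of a multilayer network `M`. -/
def AutP (p : Set (Fin (d + 1))) (M : MLNet L) : Subgroup (∀ a, Equiv.Perm (L a)) :=
  Pp L p ⊓ MulAction.stabilizer (∀ a, Equiv.Perm (L a)) M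

/-- The set `Iso_p(M, M')` of `p`-isomorphisms from `M` to `M'`. -/
def IsoP (p : Set (Fin (d + 1))) (M M' : MLNet L) : Set (∀ a, Equiv.Perm (L a)) :=
  {ζ | ζ ∈ Pp L p ∧ ζ • M = M'}

end MLNet

open MLNet

/-- The concrete single-aspect directed multilayer network on vertices {1,2} (encoded as
Fin 2, with 1 ↦ 0 and 2 ↦ 1) and layers {X,Y} (encoded as Fin 2, with X ↦ 0 and Y ↦ 1),
with edges {((1,X),(2,X)), ((1,X),(1,Y)), ((2,Y),(1,Y)), ((2,Y),(2,X))}. A vertex-layer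
tuple (v,l) is encoded as the function ![v, l] : Fin (1+1) → Fin 2. -/
def exNet : MLNet (fun _ : Fin (1 + 1) => Fin 2) where
  Vm := Set.univ
  Em := {(![0, 0], ![1, 0]), (![0, 0], ![0, 1]), (![1, 1], ![0, 1]), (![1, 1], ![1, 0])}

lemma perm2 (σ : Equiv.Perm (Fin 2)) : σ = 1 ∨ σ = Equiv.swap 0 1 := by
  revert σ; decide

lemma swap_smul_exNet :
    (fun _ : Fin (1 + 1) => Equiv.swap (0 : Fin 2) 1) • exNet = exNet := by
  refine MLNet.ext ?_ ?_
  · rw [smul_Vm]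
    show _ '' (Set.univ) = Set.univ
    exact Set.image_univ_of_surjective fun v =>
      ⟨fun a => Equiv.swap 0 1 (v a), funext fun a => Equiv.swap_apply_self _ _ _⟩
  · rw [smul_Em]
    have h1 : tupAct (fun _ : Fin (1+1) => Equiv.swap (0:Fin 2) 1) ![0,0] = ![1,1] := by decide
    have h2 : tupAct (fun _ : Fin (1+1) => Equiv.swap (0:Fin 2) 1) ![1,0] = ![0,1] := by decide
    have h3 : tupAct (fun _ : Fin (1+1) => Equiv.swap (0:Fin 2) 1) ![0,1] = ![1,0] := by decide
    have h4 : tupAct (fun _ : Fin (1+1) => Equiv.swap (0:Fin 2) 1) ![1,1] = ![0,0] := by decide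
    show _ '' exNet.Em = exNet.Em
    simp only [exNet, Set.image_insert_eq, Set.image_singleton, h1, h2, h3, h4]
    ext x
    simp only [Set.mem_insert_iff, Set.mem_singleton_iff]
    tauto

lemma fin2_ne (a i : Fin (1+1)) (h : a ≠ i) : a = i.rev := by revert h; revert a i; decide

lemma tupAct_pair (ζ : ∀ _ : Fin (1+1), Equiv.Perm (Fin 2)) (v l : Fin 2) :
    tupAct ζ ![v, l] = ![ζ 0 v, ζ 1 l] := by
  funext a; fin_cases a <;> rfl

/-- For the network exNet, the vertex automorphism group Aut_{0} and the
layer automorphism group Aut_{1} are each trivial, while the vertex-layer automorphism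
group Aut_{0,1} contains the nonidentity element ((1 2),(X Y)).  In particular there
exists a single-aspect multilayer network whose vertex and layer automorphism groups are
trivial but whose vertex-layer automorphism group is nontrivial. -/
theorem exNet_aut :
    AutP ({0} : Set (Fin (1 + 1))) exNet = ⊥ ∧
    AutP ({1} : Set (Fin (1 + 1))) exNet = ⊥ ∧
    (fun _ : Fin (1 + 1) => Equiv.swap (0 : Fin 2) 1) ∈ AutP (Set.univ) exNet ∧
    (fun _ : Fin (1 + 1) => Equiv.swap (0 : Fin 2) 1) ≠
      (1 : ∀ _ : Fin (1 + 1), Equiv.Perm (Fin 2)) := by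
  have hbot : ∀ (i : Fin (1+1)) (ζ : ∀ _ : Fin (1+1), Equiv.Perm (Fin 2)),
      ζ ∈ MulAction.stabilizer (∀ _ : Fin (1+1), Equiv.Perm (Fin 2)) exNet →
      ζ i.rev = 1 → ζ = 1 := by
    intro i ζ hstab hrev
    rcases perm2 (ζ i) with hi | hi
    · funext a
      rcases perm2 (ζ a) with ha | ha
      · exact ha
      · by_cases hai : a = i
        · rw [hai]; exact hi
        · have : a = i.rev := fin2_ne a i hai
          rw [this]; exact hrev
    · exfalso
      have hstab' : ζ • exNet = exNet := hstab
      have hEm := congrArg MLNet.Em hstab'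
      rw [smul_Em] at hEm
      have he0 : ((![0,0], ![1,0]) : (∀ _ : Fin (1+1), Fin 2) × (∀ _ : Fin (1+1), Fin 2))
          ∈ exNet.Em := by left; rfl
      have hin : (tupAct ζ ![0,0], tupAct ζ ![1,0]) ∈ exNet.Em := by
        rw [← hEm]; exact ⟨_, he0, rfl⟩
      rw [tupAct_pair, tupAct_pair] at hin
      fin_cases i
      · have h1 : ζ 1 = 1 := hrev
        rw [show (ζ 0 : Equiv.Perm (Fin 2)) = Equiv.swap 0 1 from hi, h1] at hin
        revert hin
        simp only [exNet, Set.mem_insert_iff, Set.mem_singleton_iff, Prod.ext_iff]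
        decide
      · have h0 : ζ 0 = 1 := hrev
        rw [show (ζ 1 : Equiv.Perm (Fin 2)) = Equiv.swap 0 1 from hi, h0] at hin
        revert hin
        simp only [exNet, Set.mem_insert_iff, Set.mem_singleton_iff, Prod.ext_iff]
        decide
  refine ⟨?_, ?_, ?_, ?_⟩
  · rw [eq_bot_iff]
    intro ζ hζ
    rw [Subgroup.mem_bot]
    have hrev : ζ 1 = 1 := Subgroup.mem_bot.mp (hζ.1 1 (by decide))
    exact hbot 0 ζ hζ.2 hrev
  · rw [eq_bot_iff]
    intro ζ hζ
    rw [Subgroup.mem_bot]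
    have hrev : ζ 0 = 1 := Subgroup.mem_bot.mp (hζ.1 0 (by decide))
    exact hbot 1 ζ hζ.2 hrev
  · exact ⟨fun a ha => absurd ha (by simp), swap_smul_exNet⟩
  · intro h
    have := congrFun h 0
    have h2 := congrArg (fun σ : Equiv.Perm (Fin 2) => σ 0) this
    simp [Equiv.swap_apply_left] at h2
end

section
/- Let f: 𝓜 → 𝓖 be an injective map from multilayer networks to vertex-colored graphs, and let g be an injective map from the permutation group P_p to permutations of vertex-colored graphs, such that (i) whenever f(M)^γ = f(M') for a graph permutation γ, then γ ∈ g(P_p), and (ii) f(M^ζ) = f(M)^{g(ζ)} for all ζ ∈ P_p. Then Iso_p(M, M') = g^{-1}(Iso(f(M), f(M'))). -/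
universe u

/-- A vertex-colored graph: a vertex set within an ambient vertex type `Vg`, an edge set,
and a coloring of the vertices by colors in `C`. -/
structure VCGraph (Vg : Type*) (C : Type*) where
  Vs : Set Vg
  E : Set (Vg × Vg)
  col : Vg → C

namespace VCGraph

variable {Vg C : Type*}

/-- The action `G ↦ G^γ` of a vertex permutation γ on a vertex-colored graph:
relabel the vertices, transporting edges and colors. -/
def gact (γ : Equiv.Perm Vg) (G : VCGraph Vg C) : VCGraph Vg C where
  Vs := γ '' G.Vs
  E := (fun e => (γ e.1, γ e.2)) '' G.E
  col := G.col ∘ γ.symm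

/-- `Iso(G, G')`: the set of vertex permutations mapping `G` exactly to `G'`. -/
def IsoG (G G' : VCGraph Vg C) : Set (Equiv.Perm Vg) := {γ | gact γ G = G'}

end VCGraph

open MLNet VCGraph in
/-- reduction lemma: Let f be an injective map from multilayer networks to
vertex-colored graphs and g an injective map from the permutation group P_p to
permutations of vertex-colored graphs such that (i) whenever f(M)^γ = f(M') then
γ ∈ g(P_p), and (ii) f(M^ζ) = f(M)^{g(ζ)} for all ζ ∈ P_p.  Then
Iso_p(M, M') = g⁻¹(Iso(f(M), f(M'))). -/
theorem reduction_lemma {d : ℕ} {L : Fin (d + 1) → Type u} {Vg C : Type*}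
    (p : Set (Fin (d + 1))) (hp : p.Nonempty)
    (f : MLNet L → VCGraph Vg C) (g : (∀ a, Equiv.Perm (L a)) → Equiv.Perm Vg)
    (hfinj : Function.Injective f)
    (hginj : Set.InjOn g (Pp L p))
    (hsurj : ∀ (M M' : MLNet L) (γ : Equiv.Perm Vg),
      gact γ (f M) = f M' → γ ∈ g '' (Pp L p : Set (∀ a, Equiv.Perm (L a))))
    (hequiv : ∀ (M : MLNet L), ∀ ζ ∈ Pp L p, f (ζ • M) = gact (g ζ) (f M))
    (M M' : MLNet L) :
    IsoP p M M' =
      (Pp L p : Set (∀ a, Equiv.Perm (L a))) ∩ g ⁻¹' IsoG (f M) (f M') := by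
  ext ζ
  constructor
  · rintro ⟨hζ, hM⟩
    refine ⟨hζ, ?_⟩
    show gact (g ζ) (f M) = f M'
    rw [← hequiv M ζ hζ, hM]
  · rintro ⟨hζ, hI⟩
    refine ⟨hζ, hfinj ?_⟩
    rw [hequiv M ζ hζ]
    exact hI
end

section
/- Under the hypotheses of the reduction lemma (f, g injective; f(M)^γ = f(M') implies γ ∈ g(P_p); f(M^ζ) = f(M)^{g(ζ)} for all ζ ∈ P_p), two multilayer networks M and M' are p-isomorphic if and only if the vertex-colored graphs f(M) and f(M') are isomorphic. -/
universe u

open MLNet VCGraph in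
/-- Under the hypotheses of the reduction lemma, two multilayer networks
M and M' are p-isomorphic if and only if the vertex-colored graphs f(M) and f(M') are
isomorphic. -/
theorem reduction_iff {d : ℕ} {L : Fin (d + 1) → Type u} {Vg C : Type*}
    (p : Set (Fin (d + 1))) (hp : p.Nonempty)
    (f : MLNet L → VCGraph Vg C) (g : (∀ a, Equiv.Perm (L a)) → Equiv.Perm Vg)
    (hfinj : Function.Injective f)
    (hginj : Set.InjOn g (Pp L p))
    (hsurj : ∀ (M M' : MLNet L) (γ : Equiv.Perm Vg),
      gact γ (f M) = f M' → γ ∈ g '' (Pp L p : Set (∀ a, Equiv.Perm (L a))))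
    (hequiv : ∀ (M : MLNet L), ∀ ζ ∈ Pp L p, f (ζ • M) = gact (g ζ) (f M))
    (M M' : MLNet L) :
    (∃ ζ ∈ Pp L p, ζ • M = M') ↔ (IsoG (f M) (f M')).Nonempty := by
  constructor
  · rintro ⟨ζ, hζ, rfl⟩
    exact ⟨g ζ, (hequiv M ζ hζ).symm⟩
  · rintro ⟨γ, hγ⟩
    obtain ⟨ζ, hζ, rfl⟩ := hsurj M M' γ hγ
    exact ⟨ζ, hζ, hfinj ((hequiv M ζ hζ).trans hγ)⟩
end

section
/- The construction f_p from a multilayer network M to a vertex-colored graph (vertices V_M ∪ ⋃_{a∈p} L_a; edges E_M together with auxiliary edges joining each auxiliary vertex v_a ∈ L_a (a ∈ p) to every vertex-layer tuple v ∈ V_M whose a-th coordinate is v_a; each auxiliary vertex in L_a colored a, and each tuple v ∈ V_M colored by its restriction to the coordinates outside p) is injective: f_p(M) = f_p(M') implies M = M' for M, M' sharing the same vertex set and elementary-layer sets. -/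
universe u

namespace MLNet

variable {d : ℕ} {L : Fin (d + 1) → Type u}

/-- The ambient vertex type of the auxiliary graph: vertex-layer tuples together with one
auxiliary vertex for each elementary layer of an aspect in `p`. -/
abbrev AuxV (L : Fin (d + 1) → Type u) (p : Set (Fin (d + 1))) : Type u :=
  (∀ a, L a) ⊕ (Σ a : p, L a.1)

/-- The color type of the auxiliary graph: each auxiliary vertex is colored by its aspect,
and each vertex-layer tuple is colored by its coordinates outside `p`. -/
abbrev ColT (L : Fin (d + 1) → Type u) (p : Set (Fin (d + 1))) :=
  (Fin (d + 1)) ⊕ (∀ a : {a : Fin (d + 1) // a ∉ p}, L a.1)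

/-- The permutation `g_p(ζ)` of the auxiliary vertices: act as ζ coordinatewise on
vertex-layer tuples and as ζ_a on the elements of L_a for a ∈ p. -/
def gpPerm (p : Set (Fin (d + 1))) (ζ : ∀ a, Equiv.Perm (L a)) :
    Equiv.Perm (AuxV L p) :=
  Equiv.sumCongr (Equiv.piCongrRight fun a => ζ a)
    (Equiv.sigmaCongrRight fun a : p => ζ a.1)

/-- The reduction `f_p` from a multilayer network to a vertex-colored graph: the vertices
are the vertex-layer tuples in V_M together with all the auxiliary vertices; the edges are
E_M together with an auxiliary edge joining each auxiliary vertex v_a ∈ L_a (a ∈ p) to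
every tuple v ∈ V_M whose a-th coordinate is v_a; auxiliary vertices in L_a are colored a,
and each tuple is colored by its restriction to the coordinates outside p. -/
def fp (p : Set (Fin (d + 1))) (M : MLNet L) : VCGraph (AuxV L p) (ColT L p) where
  Vs := Sum.inl '' M.Vm ∪ Set.range Sum.inr
  E := ((fun e => (Sum.inl e.1, Sum.inl e.2)) '' M.Em) ∪
    {e | ∃ v ∈ M.Vm, ∃ a : p, e = (Sum.inr ⟨a, v a.1⟩, Sum.inl v)}
  col x :=
    match x with
    | Sum.inl v => Sum.inr fun a => v a.1
    | Sum.inr s => Sum.inl s.1.1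

end MLNet

namespace VCGraph

variable {Vg C : Type*}

/-- A (color-preserving) isomorphism between the vertex sets of two vertex-colored
graphs. -/
def IsGIso {G G' : VCGraph Vg C} (e : G.Vs ≃ G'.Vs) : Prop :=
  (∀ u v : G.Vs, ((u : Vg), (v : Vg)) ∈ G.E ↔ ((e u : Vg), (e v : Vg)) ∈ G'.E) ∧
  ∀ v : G.Vs, G'.col (e v) = G.col v

end VCGraph

open MLNet in
/-- The reduction f_p from multilayer networks (on a fixed vertex set and
fixed elementary-layer sets) to vertex-colored graphs is injective. -/
theorem fp_injective {d : ℕ} {L : Fin (d + 1) → Type u}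
    (p : Set (Fin (d + 1))) (hp : p.Nonempty) :
    Function.Injective (fp (L := L) p) := by
  intro M M' h
  have hV : (fp p M).Vs = (fp p M').Vs := congrArg VCGraph.Vs h
  have hE : (fp p M).E = (fp p M').E := congrArg VCGraph.E h
  ext v
  · constructor <;> intro hv
    · have : Sum.inl v ∈ (fp p M').Vs := hV ▸ Or.inl ⟨v, hv, rfl⟩
      rcases this with ⟨w, hw, hwv⟩ | ⟨s, hs⟩
      · exact Sum.inl.inj hwv ▸ hw
      · exact absurd hs (by simp)
    · have : Sum.inl v ∈ (fp p M).Vs := hV ▸ Or.inl ⟨v, hv, rfl⟩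
      rcases this with ⟨w, hw, hwv⟩ | ⟨s, hs⟩
      · exact Sum.inl.inj hwv ▸ hw
      · exact absurd hs (by simp)
  · constructor <;> intro he
    · have : (Sum.inl v.1, Sum.inl v.2) ∈ (fp p M').E := hE ▸ Or.inl ⟨v, he, rfl⟩
      rcases this with ⟨f, hf, hfe⟩ | ⟨w, _, a, hw⟩
      · have h1 := congrArg Prod.fst hfe
        have h2 := congrArg Prod.snd hfe
        simp at h1 h2
        have : f = v := Prod.ext h1 h2
        rwa [← this]
      · simp at hw
    · have : (Sum.inl v.1, Sum.inl v.2) ∈ (fp p M).E := hE ▸ Or.inl ⟨v, he, rfl⟩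
      rcases this with ⟨f, hf, hfe⟩ | ⟨w, _, a, hw⟩
      · have h1 := congrArg Prod.fst hfe
        have h2 := congrArg Prod.snd hfe
        simp at h1 h2
        have : f = v := Prod.ext h1 h2
        rwa [← this]
      · simp at hw
end

section
/- For every ζ ∈ P_p and every multilayer network M, the reduction satisfies the equivariance property f_p(M^ζ) = f_p(M)^{g_p(ζ)}: applying ζ to M and then reducing gives the same vertex-colored graph as reducing M and applying g_p(ζ). -/
universe u

open MLNet VCGraph in
/-- For every ζ ∈ P_p and every multilayer network M, the reduction
satisfies the equivariance property f_p(M^ζ) = f_p(M)^{g_p(ζ)}. -/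
theorem fp_equivariant {d : ℕ} {L : Fin (d + 1) → Type u}
    (p : Set (Fin (d + 1))) (hp : p.Nonempty)
    (ζ : ∀ a, Equiv.Perm (L a)) (hζ : ζ ∈ Pp L p) (M : MLNet L) :
    fp p (ζ • M) = gact (gpPerm p ζ) (fp p M) := by
  have hζ' : ∀ a ∉ p, ζ a = 1 := fun a ha => hζ a ha
  unfold fp gact gpPerm
  congr 1
  · ext x
    simp only [smul_Vm, Set.image_union, Set.image_image, Set.mem_union, Set.mem_image,
      Set.mem_range, Equiv.sumCongr_apply, Sum.map_inl, Sum.map_inr]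
    constructor
    · rintro (h | ⟨y, rfl⟩)
      · exact Or.inl h
      · exact Or.inr ⟨Sum.inr ((Equiv.sigmaCongrRight fun a : p => ζ a.1).symm y), ⟨_, rfl⟩, by simp⟩
    · rintro (h | ⟨x1, ⟨y, rfl⟩, rfl⟩)
      · exact Or.inl h
      · exact Or.inr ⟨_, rfl⟩
  · ext e
    simp only [smul_Em, smul_Vm, Set.image_union, Set.image_image, Set.mem_union,
      Set.mem_image, Set.mem_setOf_eq, Equiv.sumCongr_apply, Sum.map_inl, Sum.map_inr,
      Prod.exists]
    constructor
    · rintro (⟨a, b, hab, rfl⟩ | ⟨v, ⟨x, hx, rfl⟩, a, rfl⟩)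
      · exact Or.inl ⟨a, b, hab, rfl⟩
      · exact Or.inr ⟨Sum.inr ⟨a, x a.1⟩, Sum.inl x, ⟨x, hx, a, rfl⟩, rfl⟩
    · rintro (⟨a, b, hab, rfl⟩ | ⟨u, w, ⟨v, hv, a, huw⟩, rfl⟩)
      · exact Or.inl ⟨a, b, hab, rfl⟩
      · injection huw with h1 h2
        subst h1; subst h2
        exact Or.inr ⟨tupAct ζ v, ⟨v, hv, rfl⟩, a, rfl⟩
  · funext x
    cases x with
    | inl v =>
      simp only [Function.comp_apply, Equiv.sumCongr_symm, Equiv.sumCongr_apply,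
        Sum.map_inl]
      congr 1
      funext a
      have := hζ' a.1 a.2
      simp [this]
      rfl
    | inr s => rfl
end

section
/- If γ is a permutation of the vertices of the vertex-colored graph f_p(M) such that f_p(M)^γ = f_p(M'), then γ lies in the image of g_p; i.e., there exists ζ ∈ P_p with g_p(ζ) = γ. In particular, every color-preserving isomorphism between the auxiliary graphs arises from a multilayer permutation. -/
universe u

open MLNet VCGraph in
/-- Auxiliary: if a vertex of the auxiliary graph has color `Sum.inl a`, it is an
auxiliary vertex in layer `a`. -/
lemma col_inl_cases {d : ℕ} {L : Fin (d + 1) → Type u} {p : Set (Fin (d + 1))}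
    (M : MLNet L) (w : AuxV L p) (a : Fin (d + 1)) (ha : a ∈ p)
    (h : (fp p M).col w = Sum.inl a) : ∃ l : L a, w = Sum.inr ⟨⟨a, ha⟩, l⟩ := by
  cases w with
  | inl v => simp [fp] at h
  | inr s =>
    obtain ⟨⟨a', ha'⟩, l⟩ := s
    simp [fp] at h
    subst h
    exact ⟨l, rfl⟩

open MLNet VCGraph in
/-- Every color-preserving isomorphism between the auxiliary graphs
f_p(M) and f_p(M') arises from a multilayer permutation: if e is an isomorphism from
f_p(M) to f_p(M'), then there exists ζ ∈ P_p whose induced permutation g_p(ζ) agrees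
with e on the vertices of f_p(M). -/
theorem fp_iso_lift {d : ℕ} {L : Fin (d + 1) → Type u}
    (p : Set (Fin (d + 1))) (hp : p.Nonempty) (M M' : MLNet L)
    (e : (fp p M).Vs ≃ (fp p M').Vs) (he : IsGIso e) :
    ∃ ζ ∈ Pp L p, ∀ x : (fp p M).Vs,
      ((e x : AuxV L p)) = gpPerm p ζ (x : AuxV L p) := by
  classical
  obtain ⟨heE, heC⟩ := he
  have memAux : ∀ (N : MLNet L) (a : Fin (d + 1)) (ha : a ∈ p) (l : L a),
      (Sum.inr ⟨⟨a, ha⟩, l⟩ : AuxV L p) ∈ (fp p N).Vs :=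
    fun N a ha l => Or.inr ⟨⟨⟨a, ha⟩, l⟩, rfl⟩
  have heC' : ∀ w : (fp p M').Vs, (fp p M).col (e.symm w) = (fp p M').col w := by
    intro w
    have h := heC (e.symm w)
    rw [e.apply_symm_apply] at h
    exact h.symm
  have hF : ∀ (a : Fin (d + 1)) (ha : a ∈ p) (l : L a),
      ∃ l' : L a, (e ⟨Sum.inr ⟨⟨a, ha⟩, l⟩, memAux M a ha l⟩ : AuxV L p)
        = Sum.inr ⟨⟨a, ha⟩, l'⟩ := by
    intro a ha l
    apply col_inl_cases M' _ a ha
    rw [heC]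
    rfl
  choose F hFspec using hF
  have hFinj : ∀ a ha, Function.Injective (F a ha) := by
    intro a ha l1 l2 h
    have h1 := hFspec a ha l1
    have h2 := hFspec a ha l2
    rw [h, ← h2] at h1
    have h3 := e.injective (Subtype.coe_injective h1)
    simpa using h3
  have hFsurj : ∀ a ha, Function.Surjective (F a ha) := by
    intro a ha l'
    set y : (fp p M').Vs := ⟨Sum.inr ⟨⟨a, ha⟩, l'⟩, memAux M' a ha l'⟩ with hy
    have hcy : (fp p M).col (e.symm y) = Sum.inl a := heC' y
    obtain ⟨l'', hl''⟩ := col_inl_cases M _ a ha hcy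
    refine ⟨l'', ?_⟩
    have hx : e.symm y = ⟨Sum.inr ⟨⟨a, ha⟩, l''⟩, memAux M a ha l''⟩ := Subtype.ext hl''
    have h2 := hFspec a ha l''
    rw [← hx, e.apply_symm_apply] at h2
    simp only [hy] at h2
    simpa using h2.symm
  set ζ : ∀ a, Equiv.Perm (L a) := fun a =>
    if ha : a ∈ p then Equiv.ofBijective (F a ha) ⟨hFinj a ha, hFsurj a ha⟩ else 1 with hζ
  have hζapp : ∀ (a : Fin (d + 1)) (ha : a ∈ p) (l : L a), ζ a l = F a ha l := by
    intro a ha l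
    simp [hζ, dif_pos ha]
    rfl
  have hζone : ∀ (a : Fin (d + 1)), a ∉ p → ζ a = 1 := by
    intro a ha
    simp [hζ, dif_neg ha]
  refine ⟨ζ, ?_, ?_⟩
  · refine (Subgroup.mem_pi _).mpr fun a ha => ?_
    rw [Subgroup.mem_bot]
    exact hζone a ha
  · rintro ⟨xv, hxmem⟩
    cases xv with
    | inr s =>
      obtain ⟨⟨a, ha⟩, l⟩ := s
      have h1 := hFspec a ha l
      have : (⟨Sum.inr ⟨⟨a, ha⟩, l⟩, hxmem⟩ : (fp p M).Vs)
          = ⟨Sum.inr ⟨⟨a, ha⟩, l⟩, memAux M a ha l⟩ := rfl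
      rw [this, h1]
      simp only [gpPerm, Equiv.sumCongr_apply, Sum.map_inr, Equiv.sigmaCongrRight_apply]
      rw [hζapp a ha l]
    | inl v =>
      have hv : v ∈ M.Vm := by
        rcases hxmem with ⟨v', hv', h⟩ | ⟨s, h⟩
        · obtain rfl := Sum.inl_injective h
          exact hv'
        · simp at h
      have hcol := heC ⟨Sum.inl v, hxmem⟩
      rcases hE : (e ⟨Sum.inl v, hxmem⟩ : AuxV L p) with w | s
      · -- e maps the tuple to a tuple w
        rw [hE] at hcol
        simp only [fp] at hcol
        have hout : ∀ a : {a : Fin (d + 1) // a ∉ p}, w a.1 = v a.1 := by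
          intro a
          have := Sum.inr_injective hcol
          exact congrFun this a
        have hwa : ∀ (a : Fin (d + 1)) (ha : a ∈ p), w a = F a ha (v a) := by
          intro a ha
          have hedge : ((Sum.inr ⟨⟨a, ha⟩, v a⟩ : AuxV L p), Sum.inl v) ∈ (fp p M).E :=
            Or.inr ⟨v, hv, ⟨a, ha⟩, rfl⟩
          have hed := (heE ⟨_, memAux M a ha (v a)⟩ ⟨Sum.inl v, hxmem⟩).mp hedge
          rw [hFspec a ha (v a), hE] at hed
          rcases hed with ⟨⟨e1, e2⟩, _, heq⟩ | ⟨u, hu, ⟨b, hb⟩, heq⟩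
          · simp at heq
          · rw [Prod.mk.injEq] at heq
            obtain ⟨heq1, heq2⟩ := heq
            obtain rfl : u = w := (Sum.inl_injective heq2.symm)
            have h1 := Sum.inr_injective heq1
            simp only [Sigma.mk.inj_iff, Subtype.mk.injEq] at h1
            obtain ⟨rfl, h1⟩ := h1
            exact (eq_of_heq h1).symm
        show Sum.inl w = Sum.inl (fun a => ζ a (v a))
        refine congrArg Sum.inl (funext fun a => ?_)
        by_cases ha : a ∈ p
        · rw [hwa a ha, hζapp a ha]
        · rw [hζone a ha]
          exact hout ⟨a, ha⟩
      · -- impossible: colors disagree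
        rw [hE] at hcol
        simp [fp] at hcol
end

section
/- For every nonempty p ⊆ {0,…,d} and multilayer networks M, M' with the same vertex and layer sets, Iso_p(M, M') = g_p^{-1}( Iso(f_p(M), f_p(M')) ), where Iso on the right is the set of color-preserving isomorphisms of vertex-colored graphs. Consequently M ≅_p M' if and only if f_p(M) ≅ f_p(M'). -/
universe u

section Aux
open MLNet VCGraph

variable {d : ℕ} {L : Fin (d + 1) → Type u} {Vg C : Type*}

lemma VCGraph.ext' {G G' : VCGraph Vg C} (h1 : G.Vs = G'.Vs) (h2 : G.E = G'.E)
    (h3 : G.col = G'.col) : G = G' := by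
  cases G; cases G'; cases h1; cases h2; cases h3; rfl

namespace MLNet
variable {p : Set (Fin (d + 1))} {M M' : MLNet L}

lemma mem_Pp_iff {ζ : ∀ a, Equiv.Perm (L a)} :
    ζ ∈ Pp L p ↔ ∀ a ∉ p, ζ a = 1 := by
  simp [Pp, Subgroup.mem_pi, Subgroup.mem_bot]

@[simp] lemma inl_mem_fpVs {v : ∀ a, L a} :
    (Sum.inl v : AuxV L p) ∈ (fp p M).Vs ↔ v ∈ M.Vm := by
  simp [fp]

@[simp] lemma inr_mem_fpVs {s : Σ a : p, L a.1} :
    (Sum.inr s : AuxV L p) ∈ (fp p M).Vs := by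
  simp [fp]

@[simp] lemma inl_inl_mem_fpE {u v : ∀ a, L a} :
    ((Sum.inl u : AuxV L p), (Sum.inl v : AuxV L p)) ∈ (fp p M).E ↔ (u, v) ∈ M.Em := by
  simp [fp, Prod.ext_iff]

@[simp] lemma inr_inl_mem_fpE {a : p} {x : L a.1} {v : ∀ b, L b} :
    ((Sum.inr ⟨a, x⟩ : AuxV L p), (Sum.inl v : AuxV L p)) ∈ (fp p M).E ↔
      v ∈ M.Vm ∧ x = v a.1 := by
  constructor
  · rintro (⟨⟨u1, u2⟩, _, h⟩ | ⟨w, hw, b, h⟩)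
    · simp [Prod.ext_iff] at h
    · obtain ⟨h1, h2⟩ := Prod.mk.injEq .. ▸ h
      obtain rfl := Sum.inl.inj h2
      obtain ⟨hab, hx⟩ := Sigma.mk.inj_iff.mp (Sum.inr.inj h1)
      subst hab
      exact ⟨hw, eq_of_heq hx⟩
  · rintro ⟨hv, rfl⟩
    exact Or.inr ⟨v, hv, a, rfl⟩

@[simp] lemma not_inr_right_mem_fpE {x : AuxV L p} {s : Σ a : p, L a.1} :
    (x, (Sum.inr s : AuxV L p)) ∉ (fp p M).E := by
  rintro (⟨⟨u1, u2⟩, _, h⟩ | ⟨w, hw, b, h⟩) <;> simp [Prod.ext_iff] at h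

@[simp] lemma gpPerm_inl (ζ : ∀ a, Equiv.Perm (L a)) (v : ∀ a, L a) :
    gpPerm p ζ (Sum.inl v) = Sum.inl (tupAct ζ v) := rfl

@[simp] lemma gpPerm_inr (ζ : ∀ a, Equiv.Perm (L a)) (s : Σ a : p, L a.1) :
    gpPerm p ζ (Sum.inr s) = Sum.inr ⟨s.1, ζ s.1.1 s.2⟩ := rfl

@[simp] lemma gpPerm_symm_inl (ζ : ∀ a, Equiv.Perm (L a)) (v : ∀ a, L a) :
    (gpPerm p ζ).symm (Sum.inl v) = Sum.inl (fun a => (ζ a).symm (v a)) := rfl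

@[simp] lemma gpPerm_symm_inr (ζ : ∀ a, Equiv.Perm (L a)) (s : Σ a : p, L a.1) :
    (gpPerm p ζ).symm (Sum.inr s) = Sum.inr ⟨s.1, (ζ s.1.1).symm s.2⟩ := rfl

end MLNet
end Aux
section Aux2
open MLNet VCGraph
variable {d : ℕ} {L : Fin (d + 1) → Type u} {p : Set (Fin (d + 1))} {M M' : MLNet L}
namespace MLNet

@[simp] lemma tupAct_apply (ζ : ∀ a, Equiv.Perm (L a)) (v : ∀ a, L a) (a : Fin (d+1)) :
    tupAct ζ v a = ζ a (v a) := rfl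

@[simp] lemma tupAct_inv_tupAct (ζ : ∀ a, Equiv.Perm (L a)) (v : ∀ a, L a) :
    tupAct ζ⁻¹ (tupAct ζ v) = v := by
  funext a; simp [tupAct]

@[simp] lemma tupAct_tupAct_inv (ζ : ∀ a, Equiv.Perm (L a)) (v : ∀ a, L a) :
    tupAct ζ (tupAct ζ⁻¹ v) = v := by
  funext a; simp [tupAct]

lemma mem_tupAct_image {S : Set (∀ a, L a)} {ζ : ∀ a, Equiv.Perm (L a)} {v : ∀ a, L a} :
    v ∈ tupAct ζ '' S ↔ tupAct ζ⁻¹ v ∈ S := by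
  constructor
  · rintro ⟨u, hu, rfl⟩; simpa using hu
  · intro h; exact ⟨_, h, tupAct_tupAct_inv ζ v⟩

lemma fp_injective (h : fp p M = fp p M') : M = M' := by
  have hV := congrArg VCGraph.Vs h
  have hEq := congrArg VCGraph.E h
  refine MLNet.ext ?_ ?_
  · ext v
    have := Set.ext_iff.mp hV (Sum.inl v)
    simpa using this
  · ext ⟨u, v⟩
    have := Set.ext_iff.mp hEq (Sum.inl u, Sum.inl v)
    simpa using this

lemma gact_fp_smul (ζ : ∀ a, Equiv.Perm (L a)) (hζ : ζ ∈ Pp L p) :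
    gact (gpPerm p ζ) (fp p M) = fp p (ζ • M) := by
  have hζ1 : ∀ a ∉ p, ζ a = 1 := mem_Pp_iff.mp hζ
  have hpair : (fun e : AuxV L p × AuxV L p => (gpPerm p ζ e.1, gpPerm p ζ e.2)) =
      ⇑(Equiv.prodCongr (gpPerm p ζ) (gpPerm p ζ)) := rfl
  refine VCGraph.ext' ?_ ?_ ?_
  · show gpPerm p ζ '' (fp p M).Vs = _
    ext x
    rw [Set.mem_image_equiv]
    match x with
    | Sum.inl v =>
      simp only [gpPerm_symm_inl, inl_mem_fpVs, smul_Vm, mem_tupAct_image]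
      rfl
    | Sum.inr s => simp
  · show (fun e : AuxV L p × AuxV L p => (gpPerm p ζ e.1, gpPerm p ζ e.2)) '' (fp p M).E = _
    ext ⟨x, y⟩
    rw [hpair, Set.mem_image_equiv]
    match x, y with
    | Sum.inl u, Sum.inl v =>
      simp only [Equiv.prodCongr_symm, Equiv.prodCongr_apply, Prod.map, gpPerm_symm_inl,
        inl_inl_mem_fpE, smul_Em]
      constructor
      · intro h
        refine ⟨(fun a => (ζ a).symm (u a), fun a => (ζ a).symm (v a)), h, ?_⟩
        simp only [Prod.mk.injEq]
        constructor <;> (funext a; simp [tupAct])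
      · rintro ⟨⟨u', v'⟩, h, heq⟩
        obtain ⟨h1, h2⟩ := Prod.mk.injEq .. ▸ heq
        subst h1 h2
        convert h using 2 <;> funext a <;> simp [tupAct]
    | Sum.inr s, Sum.inl v =>
      obtain ⟨a, xs⟩ := s
      simp only [Equiv.prodCongr_symm, Equiv.prodCongr_apply, Prod.map, gpPerm_symm_inl,
        gpPerm_symm_inr, inr_inl_mem_fpE, smul_Vm, mem_tupAct_image]
      constructor
      · rintro ⟨h1, h2⟩
        refine ⟨h1, ?_⟩
        have := congrArg (ζ a.1) h2
        simpa [tupAct] using this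
      · rintro ⟨h1, h2⟩
        refine ⟨h1, ?_⟩
        have := congrArg (ζ a.1).symm h2
        simpa [tupAct] using this
    | Sum.inl u, Sum.inr s => simp
    | Sum.inr s, Sum.inr t => simp
  · show (fp p M).col ∘ (gpPerm p ζ).symm = _
    funext x
    match x with
    | Sum.inl v =>
      show Sum.inr _ = Sum.inr _
      congr 1
      funext a
      simp [hζ1 a.1 a.2]
      rfl
    | Sum.inr s => rfl

end MLNet
end Aux2
section Aux3
open MLNet VCGraph

lemma VCGraph.isGIso_of_gact_eq {Vg C : Type*} {G G' : VCGraph Vg C} (γ : Equiv.Perm Vg)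
    (h : gact γ G = G') : ∃ e : G.Vs ≃ G'.Vs, IsGIso e := by
  subst h
  refine ⟨Equiv.Set.image γ G.Vs γ.injective, ?_, ?_⟩
  · intro u v
    show _ ↔ ((γ u, γ v) : Vg × Vg) ∈ (fun e : Vg × Vg => (γ e.1, γ e.2)) '' G.E
    constructor
    · intro h; exact ⟨_, h, rfl⟩
    · rintro ⟨⟨a, b⟩, hab, heq⟩
      obtain ⟨h1, h2⟩ := Prod.mk.injEq .. ▸ heq
      rwa [← γ.injective h1, ← γ.injective h2]
  · intro v
    show G.col (γ.symm (γ (v : Vg))) = _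
    rw [Equiv.symm_apply_apply]
end Aux3
section Aux4
open MLNet VCGraph
namespace MLNet
variable {d : ℕ} {L : Fin (d + 1) → Type u} {p : Set (Fin (d + 1))} {M M' : MLNet L}

lemma iso_inr_step (e : (fp p M).Vs ≃ (fp p M').Vs)
    (hcol : ∀ v : (fp p M).Vs, (fp p M').col ((e v : AuxV L p)) = (fp p M).col (v : AuxV L p))
    (s : Σ a : p, L a.1) :
    ∃ y : L s.1.1, ((e ⟨Sum.inr s, inr_mem_fpVs⟩ : (fp p M').Vs) : AuxV L p)
      = Sum.inr ⟨s.1, y⟩ := by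
  obtain ⟨⟨a, ha⟩, x⟩ := s
  have h := hcol ⟨Sum.inr ⟨⟨a, ha⟩, x⟩, inr_mem_fpVs⟩
  rcases hx : ((e ⟨Sum.inr ⟨⟨a, ha⟩, x⟩, inr_mem_fpVs⟩ : (fp p M').Vs) : AuxV L p) with w | t
  · rw [hx] at h
    exact absurd h (by simp [fp])
  · rw [hx] at h
    obtain ⟨⟨b, hb⟩, y⟩ := t
    have hba : b = a := by
      have h' : (Sum.inl b : ColT L p) = Sum.inl a := h
      exact Sum.inl.inj h'
    subst hba
    exact ⟨y, rfl⟩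

lemma iso_inl_step (e : (fp p M).Vs ≃ (fp p M').Vs)
    (hedge : ∀ u v : (fp p M).Vs, ((u : AuxV L p), (v : AuxV L p)) ∈ (fp p M).E ↔
      ((e u : AuxV L p), (e v : AuxV L p)) ∈ (fp p M').E)
    (hcol : ∀ v : (fp p M).Vs, (fp p M').col ((e v : AuxV L p)) = (fp p M).col (v : AuxV L p))
    (z : ∀ s : Σ a : p, L a.1, L s.1.1)
    (hz : ∀ s : Σ a : p, L a.1,
      ((e ⟨Sum.inr s, inr_mem_fpVs⟩ : (fp p M').Vs) : AuxV L p) = Sum.inr ⟨s.1, z s⟩)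
    (v : ∀ a, L a) (hv : v ∈ M.Vm) :
    ∃ w ∈ M'.Vm, ((e ⟨Sum.inl v, inl_mem_fpVs.mpr hv⟩ : (fp p M').Vs) : AuxV L p) = Sum.inl w ∧
      (∀ a (ha : a ∈ p), w a = z ⟨⟨a, ha⟩, v a⟩) ∧ (∀ a ∉ p, w a = v a) := by
  have h := hcol ⟨Sum.inl v, inl_mem_fpVs.mpr hv⟩
  rcases hw : ((e ⟨Sum.inl v, inl_mem_fpVs.mpr hv⟩ : (fp p M').Vs) : AuxV L p) with w | t
  swap
  · rw [hw] at h
    exact absurd h (by simp [fp])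
  rw [hw] at h
  have h' : (Sum.inr (fun a : {a : Fin (d+1) // a ∉ p} => w a.1) : ColT L p)
      = Sum.inr (fun a : {a : Fin (d+1) // a ∉ p} => v a.1) := h
  have hout : ∀ a ∉ p, w a = v a := fun a ha => congrFun (Sum.inr.inj h') ⟨a, ha⟩
  have hwm : w ∈ M'.Vm := by
    have hm := (e ⟨Sum.inl v, inl_mem_fpVs.mpr hv⟩).2
    rw [hw] at hm
    exact inl_mem_fpVs.mp hm
  refine ⟨w, hwm, rfl, ?_, hout⟩
  intro a ha
  have h1 := (hedge ⟨Sum.inr ⟨⟨a, ha⟩, v a⟩, inr_mem_fpVs⟩ ⟨Sum.inl v, inl_mem_fpVs.mpr hv⟩).mp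
    (inr_inl_mem_fpE.mpr ⟨hv, rfl⟩)
  rw [hz ⟨⟨a, ha⟩, v a⟩, hw] at h1
  exact ((inr_inl_mem_fpE.mp h1).2).symm

lemma exists_smul_eq_of_isGIso (hE : M.Em ⊆ M.Vm ×ˢ M.Vm) (hE' : M'.Em ⊆ M'.Vm ×ˢ M'.Vm)
    (e : (fp p M).Vs ≃ (fp p M').Vs) (he : IsGIso e) :
    ∃ ζ ∈ Pp L p, ζ • M = M' := by
  classical
  obtain ⟨hedge, hcol⟩ := he
  have hedge' : ∀ u v : (fp p M').Vs, ((u : AuxV L p), (v : AuxV L p)) ∈ (fp p M').E ↔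
      ((e.symm u : AuxV L p), (e.symm v : AuxV L p)) ∈ (fp p M).E := by
    intro u v
    rw [hedge (e.symm u) (e.symm v), Equiv.apply_symm_apply, Equiv.apply_symm_apply]
  have hcol' : ∀ v : (fp p M').Vs,
      (fp p M).col ((e.symm v : AuxV L p)) = (fp p M').col (v : AuxV L p) := by
    intro v
    have h := hcol (e.symm v)
    rw [Equiv.apply_symm_apply] at h
    exact h.symm
  choose z hz using iso_inr_step e hcol
  choose z' hz' using iso_inr_step e.symm hcol'
  have hzz' : ∀ s : Σ a : p, L a.1, z' ⟨s.1, z s⟩ = s.2 := by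
    rintro ⟨sa, sx⟩
    have h1 : e ⟨Sum.inr ⟨sa, sx⟩, inr_mem_fpVs⟩
        = ⟨Sum.inr ⟨sa, z ⟨sa, sx⟩⟩, inr_mem_fpVs⟩ := Subtype.ext (hz ⟨sa, sx⟩)
    have h2 := hz' ⟨sa, z ⟨sa, sx⟩⟩
    rw [← h1, Equiv.symm_apply_apply] at h2
    have h3 : (⟨sa, sx⟩ : Σ a : p, L a.1) = ⟨sa, z' ⟨sa, z ⟨sa, sx⟩⟩⟩ := Sum.inr.inj h2
    obtain ⟨-, h4⟩ := Sigma.mk.inj_iff.mp h3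
    exact (eq_of_heq h4).symm
  have hz'z : ∀ s : Σ a : p, L a.1, z ⟨s.1, z' s⟩ = s.2 := by
    rintro ⟨sa, sx⟩
    have h1 : e.symm ⟨Sum.inr ⟨sa, sx⟩, inr_mem_fpVs⟩
        = ⟨Sum.inr ⟨sa, z' ⟨sa, sx⟩⟩, inr_mem_fpVs⟩ := Subtype.ext (hz' ⟨sa, sx⟩)
    have h2 := hz ⟨sa, z' ⟨sa, sx⟩⟩
    rw [← h1, Equiv.apply_symm_apply] at h2
    have h3 : (⟨sa, sx⟩ : Σ a : p, L a.1) = ⟨sa, z ⟨sa, z' ⟨sa, sx⟩⟩⟩ := Sum.inr.inj h2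
    obtain ⟨-, h4⟩ := Sigma.mk.inj_iff.mp h3
    exact (eq_of_heq h4).symm
  let ζ : ∀ a, Equiv.Perm (L a) := fun a =>
    if ha : a ∈ p then
      { toFun := fun x => z ⟨⟨a, ha⟩, x⟩
        invFun := fun x => z' ⟨⟨a, ha⟩, x⟩
        left_inv := fun x => hzz' ⟨⟨a, ha⟩, x⟩
        right_inv := fun x => hz'z ⟨⟨a, ha⟩, x⟩ }
    else 1
  have hζp : ∀ a (ha : a ∈ p) (x : L a), ζ a x = z ⟨⟨a, ha⟩, x⟩ := by
    intro a ha x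
    simp only [ζ, dif_pos ha, Equiv.coe_fn_mk]
  have hζn : ∀ a ∉ p, ζ a = 1 := by
    intro a ha
    simp only [ζ, dif_neg ha]
  have keyV : ∀ v (hv : v ∈ M.Vm), tupAct ζ v ∈ M'.Vm ∧
      ((e ⟨Sum.inl v, inl_mem_fpVs.mpr hv⟩ : (fp p M').Vs) : AuxV L p)
        = Sum.inl (tupAct ζ v) := by
    intro v hv
    obtain ⟨w, hw1, hw2, hw3, hw4⟩ := iso_inl_step e hedge hcol z hz v hv
    have hwe : tupAct ζ v = w := by
      funext a
      by_cases ha : a ∈ p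
      · rw [tupAct_apply, hζp a ha, ← hw3 a ha]
      · rw [tupAct_apply, hζn a ha, Equiv.Perm.one_apply, hw4 a ha]
    rw [hwe]
    exact ⟨hw1, hw2⟩
  have keyV' : ∀ w (hw : w ∈ M'.Vm), ∃ v ∈ M.Vm, tupAct ζ v = w ∧
      ((e.symm ⟨Sum.inl w, inl_mem_fpVs.mpr hw⟩ : (fp p M).Vs) : AuxV L p) = Sum.inl v := by
    intro w hw
    obtain ⟨v, hv1, hv2, hv3, hv4⟩ := iso_inl_step e.symm hedge' hcol' z' hz' w hw
    refine ⟨v, hv1, ?_, hv2⟩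
    funext a
    by_cases ha : a ∈ p
    · rw [tupAct_apply, hζp a ha, hv3 a ha, hz'z ⟨⟨a, ha⟩, w a⟩]
    · rw [tupAct_apply, hζn a ha, Equiv.Perm.one_apply, hv4 a ha]
  refine ⟨ζ, mem_Pp_iff.mpr hζn, ?_⟩
  refine MLNet.ext ?_ ?_
  · rw [smul_Vm]
    ext w
    constructor
    · rintro ⟨v, hv, rfl⟩
      exact (keyV v hv).1
    · intro hw
      obtain ⟨v, hv, hvw, -⟩ := keyV' w hw
      exact ⟨v, hv, hvw⟩
  · rw [smul_Em]
    ext ⟨x, y⟩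
    constructor
    · rintro ⟨⟨u, v⟩, huv, heq⟩
      obtain ⟨h1, h2⟩ := Prod.mk.injEq .. ▸ heq
      subst h1 h2
      obtain ⟨hu, hv⟩ := hE huv
      have h := (hedge ⟨Sum.inl u, inl_mem_fpVs.mpr hu⟩ ⟨Sum.inl v, inl_mem_fpVs.mpr hv⟩).mp
        (inl_inl_mem_fpE.mpr huv)
      rw [(keyV u hu).2, (keyV v hv).2] at h
      exact inl_inl_mem_fpE.mp h
    · intro hxy
      obtain ⟨hx, hy⟩ := hE' hxy
      obtain ⟨u, hu, hux, heu⟩ := keyV' x hx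
      obtain ⟨v, hv, hvy, hev⟩ := keyV' y hy
      have heu' : e ⟨Sum.inl u, inl_mem_fpVs.mpr hu⟩ = ⟨Sum.inl x, inl_mem_fpVs.mpr hx⟩ := by
        have : e.symm ⟨Sum.inl x, inl_mem_fpVs.mpr hx⟩ = ⟨Sum.inl u, inl_mem_fpVs.mpr hu⟩ :=
          Subtype.ext heu
        rw [← this, Equiv.apply_symm_apply]
      have hev' : e ⟨Sum.inl v, inl_mem_fpVs.mpr hv⟩ = ⟨Sum.inl y, inl_mem_fpVs.mpr hy⟩ := by
        have : e.symm ⟨Sum.inl y, inl_mem_fpVs.mpr hy⟩ = ⟨Sum.inl v, inl_mem_fpVs.mpr hv⟩ :=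
          Subtype.ext hev
        rw [← this, Equiv.apply_symm_apply]
      have h := (hedge ⟨Sum.inl u, inl_mem_fpVs.mpr hu⟩ ⟨Sum.inl v, inl_mem_fpVs.mpr hv⟩).mpr
        (by rw [heu', hev']; exact inl_inl_mem_fpE.mpr hxy)
      exact ⟨(u, v), inl_inl_mem_fpE.mp h,
        by show (tupAct ζ u, tupAct ζ v) = (x, y); rw [hux, hvy]⟩

end MLNet
end Aux4

open MLNet VCGraph in
/-- For every nonempty p and multilayer networks M, M' (whose edge sets join
vertex-layer tuples that are present), Iso_p(M, M') = g_p⁻¹(Iso(f_p(M), f_p(M'))).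
Consequently M ≅ₚ M' if and only if f_p(M) ≅ f_p(M'). -/
theorem fp_reduction {d : ℕ} {L : Fin (d + 1) → Type u}
    (p : Set (Fin (d + 1))) (hp : p.Nonempty) (M M' : MLNet L)
    (hE : M.Em ⊆ M.Vm ×ˢ M.Vm) (hE' : M'.Em ⊆ M'.Vm ×ˢ M'.Vm) :
    IsoP p M M' =
      {ζ | ζ ∈ Pp L p ∧ gact (gpPerm p ζ) (fp p M) = fp p M'} ∧
    ((∃ ζ ∈ Pp L p, ζ • M = M') ↔
      ∃ e : (fp p M).Vs ≃ (fp p M').Vs, IsGIso e) := by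
  constructor
  · ext ζ
    simp only [MLNet.IsoP, Set.mem_setOf_eq]
    refine and_congr_right fun hζ => ?_
    constructor
    · intro h
      rw [MLNet.gact_fp_smul ζ hζ, h]
    · intro h
      exact MLNet.fp_injective ((MLNet.gact_fp_smul ζ hζ).symm.trans h)
  · constructor
    · rintro ⟨ζ, hζ, h⟩
      exact VCGraph.isGIso_of_gact_eq (gpPerm p ζ) (by rw [MLNet.gact_fp_smul ζ hζ, h])
    · rintro ⟨e, he⟩
      exact MLNet.exists_smul_eq_of_isGIso hE hE' e he
end
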